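/- For any graph G, at least one of the following holds: (i) ∂_{2p}(G) = ∂_p(G), or (ii) 2·∂_{2p}(G) ≥ Δ(G)·∂_p(G) + 2 - (n(G) - 2)·(Δ(G) - 2). -/

import Mathlib

open Finset

variable {V : Type*}

/-- `S` is a 2-packing: closed neighbourhoods of distinct vertices of `S` are disjoint. -/
def IsPacking2 (G : SimpleGraph V) (S : Finset V) : Prop :=
  (S : Set V).Pairwise fun u v =>
    Disjoint (G.neighborSet u ∪ {u}) (G.neighborSet v ∪ {v})

/-- The external neighbourhood of `S`: vertices outside `S` with a neighbour in `S`. -/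
def extN (G : SimpleGraph V) [Fintype V] [DecidableEq V] [DecidableRel G.Adj]
    (S : Finset V) : Finset V :=
  Finset.univ.filter fun v => v ∉ S ∧ ∃ u ∈ S, G.Adj u v

/-- The differential of a set `S`: `|N_e(S)| - |S|`. -/
def diffSet (G : SimpleGraph V) [Fintype V] [DecidableEq V] [DecidableRel G.Adj]
    (S : Finset V) : ℤ :=
  ((extN G S).card : ℤ) - S.card

/-- The 2-packing differential of `G`. -/
noncomputable def pdiff2 (G : SimpleGraph V) [Fintype V] [DecidableEq V]
    [DecidableRel G.Adj] : ℤ :=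
  sSup {d : ℤ | ∃ S : Finset V, IsPacking2 G S ∧ d = diffSet G S}

/-- The packing number of `G`: maximum cardinality of a 2-packing. -/
noncomputable def packNum (G : SimpleGraph V) [Fintype V] : ℕ :=
  sSup {n : ℕ | ∃ S : Finset V, IsPacking2 G S ∧ n = S.card}

/-- `G` has no isolated vertex. -/
def NoIsolated (G : SimpleGraph V) : Prop := ∀ v : V, ∃ u, G.Adj v u

/-- `S` is a dominating set of `G`. -/
def IsDom (G : SimpleGraph V) (S : Finset V) : Prop :=
  ∀ v, v ∉ S → ∃ u ∈ S, G.Adj u v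

/-- The perfect neighbourhood of `S`: vertices outside `S` with exactly one neighbour in `S`. -/
def perfN (G : SimpleGraph V) [Fintype V] [DecidableEq V] [DecidableRel G.Adj]
    (S : Finset V) : Finset V :=
  Finset.univ.filter fun v => v ∉ S ∧ (S.filter fun u => G.Adj u v).card = 1

/-- The perfect differential of `G`. -/
noncomputable def pdiffP (G : SimpleGraph V) [Fintype V] [DecidableEq V]
    [DecidableRel G.Adj] : ℤ :=
  sSup {d : ℤ | ∃ S : Finset V, d = ((perfN G S).card : ℤ) - S.card}

/-!
Suppose `∂_{2p}(G) < ∂_p(G)` and let `S` be a smallest set with `|N_p(S)| - |S| = ∂_p(G)`.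
Minimality forces every `v ∈ S` to have at least two private perfect neighbours, and `S` is not a
2-packing. Take a maximal 2-packing `A ⊆ S`. Every `u ∈ S \ A` has a closed neighbourhood meeting
that of some vertex of `A`, so one of its neighbours is not a private perfect neighbour of `u`, and
`u` has at most `Δ - 1` of them; in particular `Δ ≥ 3`. The private perfect neighbours of the
vertices of `A` number at most `∂_{2p}(G) + |A|`; if `A = {v}` is a single vertex, use instead that
`v` too has at most `Δ - 1` of them and that `∂_{2p}(G) ≥ Δ - 1`. Either way
`|N_p(S)| ≤ ∂_{2p}(G) + (Δ - 1)(|S| - 1)`, and `|S| + |N_p(S)| ≤ n` gives the bound.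
-/

section Packing

variable {G : SimpleGraph V}

lemma isPacking2_empty : IsPacking2 G (∅ : Finset V) := by
  simp [IsPacking2]

lemma isPacking2_singleton (v : V) : IsPacking2 G ({v} : Finset V) := by
  simp [IsPacking2]

namespace IsPacking2

variable {A : Finset V} {u v w : V}

lemma not_adj (hA : IsPacking2 G A) (hu : u ∈ A) (hv : v ∈ A) : ¬G.Adj u v := fun h =>
  Set.disjoint_left.1 (hA hu hv h.ne) (Or.inl h) (Or.inr rfl)

lemma eq_of_adj (hA : IsPacking2 G A) (hu : u ∈ A) (hv : v ∈ A) (huw : G.Adj u w)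
    (hvw : G.Adj v w) : u = v := by
  by_contra huv
  exact Set.disjoint_left.1 (hA hu hv huv) (Or.inl huw) (Or.inl hvw)

lemma insert [DecidableEq V] (hA : IsPacking2 G A)
    (h : ∀ v ∈ A, Disjoint (G.neighborSet u ∪ {u}) (G.neighborSet v ∪ {v})) :
    IsPacking2 G (insert u A) := by
  rw [IsPacking2, coe_insert, Set.pairwise_insert]
  exact ⟨hA, fun v hv _ => ⟨h v hv, (h v hv).symm⟩⟩

end IsPacking2

lemma mem_and_adj_of_filter_adj_eq_singleton [DecidableRel G.Adj] {S : Finset V} {v w : V}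
    (h : S.filter (G.Adj · w) = {v}) : v ∈ S ∧ G.Adj v w :=
  mem_filter.1 (eq_singleton_iff_unique_mem.1 h).1

lemma exists_maximal_isPacking2_subset [DecidableEq V] (S : Finset V) :
    ∃ A ⊆ S, IsPacking2 G A ∧
      ∀ u ∈ S \ A, ∃ v ∈ A, ¬Disjoint (G.neighborSet u ∪ {u}) (G.neighborSet v ∪ {v}) := by
  classical
  obtain ⟨A, hA, hmax⟩ := exists_max_image (S.powerset.filter (IsPacking2 G)) card
    ⟨∅, mem_filter.2 ⟨empty_mem_powerset S, isPacking2_empty⟩⟩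
  simp only [mem_filter, mem_powerset, and_imp] at hA hmax
  refine ⟨A, hA.1, hA.2, fun u hu => ?_⟩
  rw [mem_sdiff] at hu
  by_contra! h
  have hcard := hmax _ (insert_subset hu.1 hA.1) (hA.2.insert h)
  rw [card_insert_of_notMem hu.2] at hcard
  omega

end Packing

section

variable [Fintype V] [DecidableEq V] (G : SimpleGraph V) [DecidableRel G.Adj]

def perfDiff (S : Finset V) : ℤ := #(perfN G S) - #S

def privatePerfN (S : Finset V) (v : V) : Finset V :=
  univ.filter fun w => w ∉ S ∧ S.filter (G.Adj · w) = {v}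

variable {G}

@[simp]
lemma mem_perfN {S : Finset V} {w : V} :
    w ∈ perfN G S ↔ w ∉ S ∧ #(S.filter (G.Adj · w)) = 1 := by
  simp [perfN]

@[simp]
lemma mem_extN {S : Finset V} {w : V} : w ∈ extN G S ↔ w ∉ S ∧ ∃ u ∈ S, G.Adj u w := by
  simp [extN]

@[simp]
lemma mem_privatePerfN {S : Finset V} {v w : V} :
    w ∈ privatePerfN G S v ↔ w ∉ S ∧ S.filter (G.Adj · w) = {v} := by
  simp [privatePerfN]

lemma perfN_eq_biUnion_privatePerfN (S : Finset V) :
    perfN G S = S.biUnion (privatePerfN G S) := by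
  ext w
  simp only [mem_perfN, mem_biUnion, mem_privatePerfN, card_eq_one]
  constructor
  · rintro ⟨hw, v, hv⟩
    exact ⟨v, (mem_and_adj_of_filter_adj_eq_singleton hv).1, hw, hv⟩
  · rintro ⟨v, -, hw, hv⟩
    exact ⟨hw, v, hv⟩

lemma card_perfN_eq_sum (S : Finset V) : #(perfN G S) = ∑ v ∈ S, #(privatePerfN G S v) := by
  rw [perfN_eq_biUnion_privatePerfN, card_biUnion]
  intro u _ v _ huv
  refine disjoint_left.2 fun w hwu hwv => huv ?_
  exact singleton_injective ((mem_privatePerfN.1 hwu).2.symm.trans (mem_privatePerfN.1 hwv).2)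

lemma privatePerfN_subset_perfN (S : Finset V) (v : V) : privatePerfN G S v ⊆ perfN G S :=
  fun w hw => by
    rw [mem_privatePerfN] at hw
    simp [hw.1, hw.2]

lemma privatePerfN_subset_neighborFinset (S : Finset V) (v : V) :
    privatePerfN G S v ⊆ G.neighborFinset v := fun w hw =>
  (G.mem_neighborFinset v w).2
    (mem_and_adj_of_filter_adj_eq_singleton (mem_privatePerfN.1 hw).2).2

lemma card_add_card_perfN_le (S : Finset V) : #S + #(perfN G S) ≤ Fintype.card V := by
  rw [← card_union_of_disjoint (disjoint_left.2 fun w hwS hw => (mem_perfN.1 hw).1 hwS)]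
  exact card_le_univ _

/-- Either `v` itself or a common neighbour of `u` and `v` is a neighbour of `u` that is not a
private perfect neighbour of `u`. -/
lemma card_privatePerfN_lt_degree {S : Finset V} {u v : V} (hv : v ∈ S) (huv : u ≠ v)
    (h : ¬Disjoint (G.neighborSet u ∪ {u}) (G.neighborSet v ∪ {v})) :
    #(privatePerfN G S u) < G.degree u := by
  rw [← G.card_neighborFinset_eq_degree]
  refine card_lt_card ((ssubset_iff_of_subset (privatePerfN_subset_neighborFinset S u)).2 ?_)
  simp only [SimpleGraph.mem_neighborFinset, mem_privatePerfN, not_and]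
  by_cases hadj : G.Adj u v
  · exact ⟨v, hadj, fun hvS => absurd hv hvS⟩
  obtain ⟨z, hzu, hzv⟩ := Set.not_disjoint_iff.1 h
  simp only [Set.mem_union, Set.mem_singleton_iff, SimpleGraph.mem_neighborSet] at hzu hzv
  rcases hzu with hzu | rfl <;> rcases hzv with hzv | rfl
  · refine ⟨z, hzu, fun _ hz => huv (Eq.symm ?_)⟩
    rw [← mem_singleton, ← hz]
    exact mem_filter.2 ⟨hv, hzv⟩
  · exact absurd hzu hadj
  · exact absurd hzv.symm hadj
  · exact absurd rfl huv

lemma perfN_sdiff_privatePerfN_subset (S : Finset V) (v : V) :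
    perfN G S \ privatePerfN G S v ⊆ perfN G (S.erase v) := by
  intro w hw
  simp only [mem_sdiff, mem_perfN, mem_privatePerfN, card_eq_one, not_and] at hw
  obtain ⟨⟨hwS, u, hu⟩, hwv⟩ := hw
  have huv : u ≠ v := by
    rintro rfl
    exact hwv hwS hu
  refine mem_perfN.2 ⟨fun h => hwS (mem_of_mem_erase h), ?_⟩
  rw [filter_erase, hu, erase_eq_of_notMem (notMem_singleton.2 huv.symm), card_singleton]

/-- Deleting `v` from `S` loses at most the private perfect neighbours of `v`. -/
lemma two_le_card_privatePerfN {S : Finset V} {v : V} (hv : v ∈ S)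
    (h : perfDiff G (S.erase v) < perfDiff G S) : 2 ≤ #(privatePerfN G S v) := by
  have hsdiff := card_le_card (perfN_sdiff_privatePerfN_subset (G := G) S v)
  rw [card_sdiff_of_subset (privatePerfN_subset_perfN S v)] at hsdiff
  have hle := card_le_card (privatePerfN_subset_perfN (G := G) S v)
  have herase := card_erase_of_mem hv
  have hpos := card_pos.2 ⟨v, hv⟩
  unfold perfDiff at h
  omega

namespace IsPacking2

variable {A : Finset V} {u v w : V}

lemma extN_eq_biUnion (hA : IsPacking2 G A) :
    extN G A = A.biUnion fun v => G.neighborFinset v := by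
  ext w
  simp only [mem_extN, mem_biUnion, SimpleGraph.mem_neighborFinset]
  exact ⟨fun h => h.2, fun ⟨u, hu, huw⟩ => ⟨fun hw => hA.not_adj hu hw huw, u, hu, huw⟩⟩

lemma card_extN (hA : IsPacking2 G A) : #(extN G A) = ∑ v ∈ A, G.degree v := by
  rw [hA.extN_eq_biUnion, card_biUnion]
  · simp only [SimpleGraph.card_neighborFinset_eq_degree]
  · intro u hu v hv huv
    exact disjoint_left.2 fun w hwu hwv => huv (hA.eq_of_adj hu hv
      ((G.mem_neighborFinset u w).1 hwu) ((G.mem_neighborFinset v w).1 hwv))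

lemma perfN_eq_extN (hA : IsPacking2 G A) : perfN G A = extN G A := by
  ext w
  simp only [mem_perfN, mem_extN, card_eq_one, and_congr_right_iff]
  refine fun _ => ⟨fun ⟨v, hv⟩ => ⟨v, mem_and_adj_of_filter_adj_eq_singleton hv⟩, ?_⟩
  rintro ⟨v, hvA, hvw⟩
  refine ⟨v, eq_singleton_iff_unique_mem.2 ⟨mem_filter.2 ⟨hvA, hvw⟩, fun u hu => ?_⟩⟩
  exact hA.eq_of_adj (mem_filter.1 hu).1 hvA (mem_filter.1 hu).2 hvw

lemma perfDiff_eq_diffSet (hA : IsPacking2 G A) : perfDiff G A = diffSet G A := by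
  rw [perfDiff, diffSet, hA.perfN_eq_extN]

end IsPacking2

variable (G)

lemma pdiffP_eq_sSup_range : pdiffP G = sSup (Set.range (perfDiff G)) := by
  rw [pdiffP]
  congr 1
  ext d
  exact exists_congr fun S => eq_comm

lemma pdiff2_eq_sSup_image : pdiff2 G = sSup (diffSet G '' {S | IsPacking2 G S}) := by
  rw [pdiff2]
  congr 1
  ext d
  exact exists_congr fun S => and_congr_right' eq_comm

lemma perfDiff_le_pdiffP (S : Finset V) : perfDiff G S ≤ pdiffP G := by
  rw [pdiffP_eq_sSup_range]
  exact le_csSup (Set.finite_range _).bddAbove (Set.mem_range_self S)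

lemma exists_perfDiff_eq_pdiffP : ∃ S, perfDiff G S = pdiffP G := by
  rw [pdiffP_eq_sSup_range]
  exact (Set.range_nonempty _).csSup_mem (Set.finite_range _)

variable {G} in
lemma diffSet_le_pdiff2 {S : Finset V} (hS : IsPacking2 G S) : diffSet G S ≤ pdiff2 G := by
  rw [pdiff2_eq_sSup_image]
  exact le_csSup (Set.toFinite _).bddAbove ⟨S, hS, rfl⟩

variable {G} in
lemma IsPacking2.perfDiff_le_pdiff2 {S : Finset V} (hS : IsPacking2 G S) :
    perfDiff G S ≤ pdiff2 G :=
  hS.perfDiff_eq_diffSet ▸ diffSet_le_pdiff2 hS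

lemma pdiff2_le_pdiffP : pdiff2 G ≤ pdiffP G := by
  rw [pdiff2_eq_sSup_image]
  refine csSup_le ⟨_, ∅, isPacking2_empty, rfl⟩ ?_
  rintro _ ⟨A, hA, rfl⟩
  exact hA.perfDiff_eq_diffSet ▸ perfDiff_le_pdiffP G A

lemma maxDegree_sub_one_le_pdiff2 [Nonempty V] : (G.maxDegree : ℤ) - 1 ≤ pdiff2 G := by
  obtain ⟨v, hv⟩ := G.exists_maximal_degree_vertex
  have h := diffSet_le_pdiff2 (isPacking2_singleton (G := G) v)
  rwa [diffSet, (isPacking2_singleton v).card_extN, sum_singleton, card_singleton, ← hv] at h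

variable {G} in
lemma IsPacking2.sum_card_privatePerfN_sub_card_le {A : Finset V} (hA : IsPacking2 G A)
    (S : Finset V) : ((∑ v ∈ A, #(privatePerfN G S v) : ℕ) : ℤ) - #A ≤ pdiff2 G := by
  have hsum : ∑ v ∈ A, #(privatePerfN G S v) ≤ ∑ v ∈ A, G.degree v := sum_le_sum fun v _ =>
    (card_le_card (privatePerfN_subset_neighborFinset S v)).trans_eq
      (G.card_neighborFinset_eq_degree v)
  have h := diffSet_le_pdiff2 hA
  rw [diffSet, hA.card_extN] at h
  omega

lemma exists_perfDiff_eq_pdiffP_forall_two_le_card_privatePerfN :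
    ∃ S, perfDiff G S = pdiffP G ∧ ∀ v ∈ S, 2 ≤ #(privatePerfN G S v) := by
  classical
  obtain ⟨S₀, hS₀⟩ := exists_perfDiff_eq_pdiffP G
  obtain ⟨S, hS, hmin⟩ := exists_min_image (univ.filter fun S => perfDiff G S = pdiffP G) card
    ⟨S₀, mem_filter.2 ⟨mem_univ _, hS₀⟩⟩
  simp only [mem_filter, mem_univ, true_and] at hS hmin
  refine ⟨S, hS, fun v hv => two_le_card_privatePerfN hv ?_⟩
  refine hS ▸ (perfDiff_le_pdiffP G _).lt_of_ne fun h => ?_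
  have hcard := hmin _ h
  rw [card_erase_of_mem hv] at hcard
  have := card_pos.2 ⟨v, hv⟩
  omega

variable {G} in
lemma card_privatePerfN_lt_maxDegree_of_mem_sdiff {S A : Finset V} (hAS : A ⊆ S)
    (hmeet : ∀ u ∈ S \ A, ∃ v ∈ A, ¬Disjoint (G.neighborSet u ∪ {u}) (G.neighborSet v ∪ {v}))
    {u : V} (hu : u ∈ S \ A) : #(privatePerfN G S u) < G.maxDegree := by
  obtain ⟨v, hvA, huv⟩ := hmeet u hu
  have hne : u ≠ v := (ne_of_mem_of_not_mem hvA (mem_sdiff.1 hu).2).symm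
  exact (card_privatePerfN_lt_degree (hAS hvA) hne huv).trans_le (G.degree_le_maxDegree u)

variable {G} in
lemma card_perfN_le_pdiff2_add {S A : Finset V} (hAS : A ⊆ S) (hA : IsPacking2 G A)
    (hmeet : ∀ u ∈ S \ A, ∃ v ∈ A, ¬Disjoint (G.neighborSet u ∪ {u}) (G.neighborSet v ∪ {v}))
    {u₀ : V} (hu₀ : u₀ ∈ S \ A) (hΔ : 3 ≤ G.maxDegree) :
    (#(perfN G S) : ℤ) ≤ pdiff2 G + ((G.maxDegree : ℤ) - 1) * (#S - 1) := by
  have hrest : (∑ u ∈ S \ A, #(privatePerfN G S u) : ℤ) ≤ (#S - #A) * (G.maxDegree - 1) := by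
    have hle : ∀ u ∈ S \ A, (#(privatePerfN G S u) : ℤ) ≤ G.maxDegree - 1 := fun u hu => by
      have := card_privatePerfN_lt_maxDegree_of_mem_sdiff hAS hmeet hu
      omega
    rw [← Nat.cast_sub (card_le_card hAS), ← card_sdiff_of_subset hAS, ← nsmul_eq_mul]
    exact sum_le_card_nsmul _ _ _ hle
  have hsplit : (#(perfN G S) : ℤ) =
      ∑ u ∈ S \ A, (#(privatePerfN G S u) : ℤ) + ∑ v ∈ A, (#(privatePerfN G S v) : ℤ) := by
    rw [card_perfN_eq_sum, ← sum_sdiff hAS, Nat.cast_add, Nat.cast_sum, Nat.cast_sum]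
  obtain ⟨v₀, hv₀A, hmeet₀⟩ := hmeet u₀ hu₀
  rcases (one_le_card.2 ⟨v₀, hv₀A⟩).eq_or_lt with hA₁ | hA₂
  · obtain ⟨a, rfl⟩ := card_eq_one.1 hA₁.symm
    obtain rfl : v₀ = a := mem_singleton.1 hv₀A
    have hne : v₀ ≠ u₀ := ne_of_mem_of_not_mem hv₀A (mem_sdiff.1 hu₀).2
    have hv₀ := (card_privatePerfN_lt_degree (S := S) (mem_sdiff.1 hu₀).1 hne
      fun h => hmeet₀ h.symm).trans_le (G.degree_le_maxDegree v₀)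
    have : Nonempty V := ⟨v₀⟩
    have hq := maxDegree_sub_one_le_pdiff2 G
    rw [sum_singleton] at hsplit
    rw [card_singleton, Nat.cast_one] at hrest
    have hv₀' : (#(privatePerfN G S v₀) : ℤ) ≤ G.maxDegree - 1 := by omega
    linarith
  · have hq := hA.sum_card_privatePerfN_sub_card_le S
    push_cast at hq
    have hA₂' : (2 : ℤ) ≤ #A := by exact_mod_cast hA₂
    have hΔ' : (3 : ℤ) ≤ G.maxDegree := by exact_mod_cast hΔ
    nlinarith [mul_nonneg (sub_nonneg.2 hA₂') (sub_nonneg.2 hΔ')]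

end

theorem stmt17 {V : Type*} [Fintype V] [DecidableEq V] (G : SimpleGraph V)
    [DecidableRel G.Adj] :
    pdiff2 G = pdiffP G ∨
      (G.maxDegree : ℤ) * pdiffP G + 2
          - ((Fintype.card V : ℤ) - 2) * ((G.maxDegree : ℤ) - 2)
        ≤ 2 * pdiff2 G := by
  refine (pdiff2_le_pdiffP G).eq_or_lt.imp_right fun hlt => ?_
  obtain ⟨S, hS, htwo⟩ := exists_perfDiff_eq_pdiffP_forall_two_le_card_privatePerfN G
  have hSnp : ¬IsPacking2 G S := fun hS' => hlt.not_ge (hS ▸ hS'.perfDiff_le_pdiff2)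
  obtain ⟨A, hAS, hA, hmeet⟩ := exists_maximal_isPacking2_subset (G := G) S
  obtain ⟨u, hu⟩ : (S \ A).Nonempty :=
    sdiff_nonempty.2 fun hSA => hSnp (Subset.antisymm hAS hSA ▸ hA)
  have hΔ : 3 ≤ G.maxDegree := by
    have := card_privatePerfN_lt_maxDegree_of_mem_sdiff hAS hmeet hu
    have := htwo u (mem_sdiff.1 hu).1
    omega
  have hbound := card_perfN_le_pdiff2_add hAS hA hmeet hu hΔ
  have hn : (#S : ℤ) + #(perfN G S) ≤ Fintype.card V := mod_cast card_add_card_perfN_le S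
  have hΔ' : (2 : ℤ) ≤ G.maxDegree := by exact_mod_cast hΔ.trans' (by norm_num)
  rw [← hS, perfDiff]
  nlinarith [mul_nonneg (sub_nonneg.2 hn) (sub_nonneg.2 hΔ')]
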